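/- Let 0 < s₁ ≤ s₂ and 0 < α ≤ s₁/s₂. With I₁, I₂ the Poisson mutual information functions (gains α, 1; dark currents s₁, s₂), the function I₂ − I₁ is concave on [0,1]. -/

import Mathlib

open Real Set

/-! The second derivative of `I₂ - I₁` is `α / (q + s₁) - 1 / (q + s₂)`, which is nonpositive
for `q ≥ 0` exactly when `α (q + s₂) ≤ q + s₁`; this follows from `α ≤ 1` and `α s₂ ≤ s₁`. -/

/-- In the paper's notation `I₂ = poissonInfo s₂` and `I₁ = α * poissonInfo s₁`. -/
noncomputable def poissonInfo (s q : ℝ) : ℝ :=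
  -(q + s) * log (q + s) + q * (1 + s) * log (1 + s) + (1 - q) * s * log s

noncomputable def poissonInfoDeriv (s q : ℝ) : ℝ :=
  (1 + s) * log (1 + s) - s * log s - (log (q + s) + 1)

lemma hasDerivAt_poissonInfo {s x : ℝ} (hx : 0 < x + s) :
    HasDerivAt (poissonInfo s) (poissonInfoDeriv s x) x := by
  have hmul_log : HasDerivAt (fun q ↦ (q + s) * log (q + s)) (log (x + s) + 1) x :=
    (hasDerivAt_mul_log hx.ne').comp_add_const x s
  have hlin : HasDerivAt (fun q ↦ q * ((1 + s) * log (1 + s)) + (1 - q) * (s * log s))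
      ((1 + s) * log (1 + s) - s * log s) x :=
    (((hasDerivAt_id' x).mul_const ((1 + s) * log (1 + s))).add
      (((hasDerivAt_const x 1).sub (hasDerivAt_id' x)).mul_const (s * log s))).congr_deriv
      (by ring)
  have hsplit : poissonInfo s =
      fun q ↦ q * ((1 + s) * log (1 + s)) + (1 - q) * (s * log s) - (q + s) * log (q + s) := by
    funext q
    simp only [poissonInfo]
    ring
  rw [hsplit]
  exact (hlin.sub hmul_log).congr_deriv (by simp only [poissonInfoDeriv])

lemma hasDerivAt_poissonInfoDeriv {s x : ℝ} (hx : 0 < x + s) :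
    HasDerivAt (poissonInfoDeriv s) (-(x + s)⁻¹) x := by
  have hlog : HasDerivAt (fun q ↦ log (q + s)) (x + s)⁻¹ x :=
    (hasDerivAt_log hx.ne').comp_add_const x s
  exact (hlog.add_const 1).const_sub ((1 + s) * log (1 + s) - s * log s)

theorem concaveOn_poissonInfo_sub_mul {s₁ s₂ α : ℝ} (h₁ : 0 < s₁) (h₂ : 0 < s₂)
    (hα₁ : α ≤ 1) (hαs : α * s₂ ≤ s₁) :
    ConcaveOn ℝ (Ici 0) (fun q ↦ poissonInfo s₂ q - α * poissonInfo s₁ q) := by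
  have hpos {x : ℝ} (hx : 0 ≤ x) : 0 < x + s₁ ∧ 0 < x + s₂ := ⟨by linarith, by linarith⟩
  have hderiv {x : ℝ} (hx : 0 ≤ x) :
      HasDerivAt (fun q ↦ poissonInfo s₂ q - α * poissonInfo s₁ q)
        (poissonInfoDeriv s₂ x - α * poissonInfoDeriv s₁ x) x :=
    (hasDerivAt_poissonInfo (hpos hx).2).sub ((hasDerivAt_poissonInfo (hpos hx).1).const_mul α)
  have hderiv2 {x : ℝ} (hx : 0 ≤ x) :
      HasDerivAt (fun q ↦ poissonInfoDeriv s₂ q - α * poissonInfoDeriv s₁ q)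
        (-(x + s₂)⁻¹ - α * -(x + s₁)⁻¹) x :=
    (hasDerivAt_poissonInfoDeriv (hpos hx).2).sub
      ((hasDerivAt_poissonInfoDeriv (hpos hx).1).const_mul α)
  refine concaveOn_of_hasDerivWithinAt2_nonpos (convex_Ici 0)
    (f' := fun q ↦ poissonInfoDeriv s₂ q - α * poissonInfoDeriv s₁ q)
    (f'' := fun q ↦ -(q + s₂)⁻¹ - α * -(q + s₁)⁻¹)
    (fun x hx ↦ (hderiv hx).continuousAt.continuousWithinAt) ?_ ?_ ?_
  all_goals simp only [interior_Ici, mem_Ioi]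
  · exact fun x hx ↦ (hderiv hx.le).hasDerivWithinAt
  · exact fun x hx ↦ (hderiv2 hx.le).hasDerivWithinAt
  · intro x hx
    obtain ⟨hx₁, hx₂⟩ := hpos hx.le
    have hcross : α * (x + s₂) ≤ x + s₁ := by nlinarith
    have hinv : α / (x + s₁) ≤ 1 / (x + s₂) := by
      rwa [div_le_div_iff₀ hx₁ hx₂, one_mul]
    simp only [div_eq_mul_inv, one_mul] at hinv
    linarith

theorem less_noisy_concave'_general (s₁ s₂ α : ℝ) (h1 : 0 < s₁) (h12 : s₁ ≤ s₂)
    (hα : α ≤ s₁ / s₂) :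
    ConcaveOn ℝ (Icc (0:ℝ) 1) (fun q : ℝ =>
      (-(q + s₂) * Real.log (q + s₂) + q * (1 + s₂) * Real.log (1 + s₂)
        + (1 - q) * s₂ * Real.log s₂)
      - α * (-(q + s₁) * Real.log (q + s₁) + q * (1 + s₁) * Real.log (1 + s₁)
        + (1 - q) * s₁ * Real.log s₁)) := by
  have h2 : 0 < s₂ := h1.trans_le h12
  have hα₁ : α ≤ 1 := hα.trans (div_le_one_of_le₀ h12 h2.le)
  have hαs : α * s₂ ≤ s₁ := (le_div_iff₀ h2).mp hα
  exact (concaveOn_poissonInfo_sub_mul h1 h2 hα₁ hαs).subset Icc_subset_Ici_self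
    (convex_Icc 0 1)

theorem less_noisy_concave' (s₁ s₂ α : ℝ) (h1 : 0 < s₁) (h12 : s₁ ≤ s₂)
    (hα0 : 0 < α) (hα : α ≤ s₁ / s₂) :
    ConcaveOn ℝ (Icc (0:ℝ) 1) (fun q : ℝ =>
      (-(q + s₂) * Real.log (q + s₂) + q * (1 + s₂) * Real.log (1 + s₂)
        + (1 - q) * s₂ * Real.log s₂)
      - α * (-(q + s₁) * Real.log (q + s₁) + q * (1 + s₁) * Real.log (1 + s₁)
        + (1 - q) * s₁ * Real.log s₁)) :=
  less_noisy_concave'_general s₁ s₂ α h1 h12 hα
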